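/- arXiv:1310.1386 — 5 statements merged into one kernel-verified Lean document; each statement's English description precedes it below -/
import Mathlib

section
/- For every integer r ≥ 2 there exists a constant C_r such that the following holds: for every natural number k, every surjective colouring Δ: ℕ^(r) ↠ [k], and every natural number m with m ≤ k, there exists m' ∈ F_Δ such that |m - m'| ≤ (r/(2·(r!)^{1/r}))·m^{1-1/r} + C_r·m^{1-2/r}. -/
open Finset

/-- The set of colours attained by `Δ` on `r`-element subsets of `X`. -/
def coloursOn {α : Type*} (r : ℕ) (Δ : Finset ℕ → α) (X : Set ℕ) : Set α :=
  Δ '' {e : Finset ℕ | ↑e ⊆ X ∧ e.card = r}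

/-- `γ(X)`: the number of colours attained by `Δ` on `r`-element subsets of `X`. -/
noncomputable def gamma {α : Type*} (r : ℕ) (Δ : Finset ℕ → α) (X : Set ℕ) : ℕ :=
  (coloursOn r Δ X).ncard

/-- `F_Δ`: the set of values `γ(X)` over infinite subsets `X ⊆ ℕ`. -/
def Fdelta {α : Type*} (r : ℕ) (Δ : Finset ℕ → α) : Set ℕ :=
  {m | ∃ X : Set ℕ, X.Infinite ∧ gamma r Δ X = m}

/-- `Δ` is a surjective colouring of `ℕ^(r)`, the `r`-element subsets of `ℕ`,
onto the colour set `[k] = {1, …, k}`. -/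
def IsColouring (r k : ℕ) (Δ : Finset ℕ → ℕ) : Prop :=
  (∀ e : Finset ℕ, e.card = r → Δ e ∈ Finset.Icc 1 k) ∧
  ∀ c ∈ Finset.Icc 1 k, ∃ e : Finset ℕ, e.card = r ∧ Δ e = c

/-!
Let `W₀` be a union of finitely many `r`-sets showing all `k` colours. Applying Ramsey's theorem once for each
`T ⊆ W₀` yields an infinite `M` on which the colour of `T ∪ u` (`u ⊆ M`) depends only on `T`; so
for every `W ⊆ W₀` the colours on `W ∪ M` are indexed by subsets of `W` of size at most `r`, and
`r! γ(W ∪ M) ≤ (|W| + r)^r`. Take `W ⊆ W₀` minimal with `γ(W ∪ M) ≥ m`. A colour of `W ∪ M` is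
lost on deleting `w` only if `w` lies in its chosen representative, so averaging over `w ∈ W` gives
`w` with `|W| (γ - γ') ≤ r γ`, where `γ' = γ((W - w) ∪ M) < m ≤ γ`. Thus the gap `γ - γ'` is about
`r m / |W| ≤ r m / (r! m)^(1/r)`, and the nearer of `γ`, `γ'` is within half of it.
-/

open scoped Nat

lemma exists_strictMono_of_forall_infinite {S : Set ℕ} (hS : S.Infinite) (Q : ℕ → Set ℕ → Prop)
    (step : ∀ T ⊆ S, T.Infinite → ∃ a ∈ T, ∃ U ⊆ T, U.Infinite ∧ (∀ x ∈ U, a < x) ∧ Q a U) :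
    ∃ a : ℕ → ℕ, StrictMono a ∧ (∀ n, a n ∈ S) ∧
      ∀ i, ∃ U, Q (a i) U ∧ ∀ j, i < j → a j ∈ U := by
  choose! pt hpt nxt hnxt_sub hnxt_inf hnxt_gt hQ using step
  set U : ℕ → Set ℕ := fun n => nxt^[n] S
  have hU_succ (n : ℕ) : U (n + 1) = nxt (U n) := Function.iterate_succ_apply' _ _ _
  have hU (n : ℕ) : U n ⊆ S ∧ (U n).Infinite := by
    induction n with
    | zero => exact ⟨subset_rfl, hS⟩
    | succ n ih =>
      rw [hU_succ]
      exact ⟨(hnxt_sub _ ih.1 ih.2).trans ih.1, hnxt_inf _ ih.1 ih.2⟩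
  have hU_anti : Antitone U := antitone_nat_of_succ_le fun n => by
    rw [hU_succ]; exact hnxt_sub _ (hU n).1 (hU n).2
  have hmem (n : ℕ) : pt (U n) ∈ U n := hpt _ (hU n).1 (hU n).2
  refine ⟨fun n => pt (U n), strictMono_nat_of_lt_succ fun n => ?_, fun n => (hU n).1 (hmem n),
    fun i => ⟨U (i + 1), ?_, fun j hij => hU_anti hij (hmem j)⟩⟩
  · exact hnxt_gt _ (hU n).1 (hU n).2 _ (hU_succ n ▸ hmem (n + 1))
  · rw [hU_succ]; exact hQ _ (hU i).1 (hU i).2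

theorem exists_infinite_monochromatic {α : Type*} {K : Set α} (hK : K.Finite) (s : ℕ)
    (f : Finset ℕ → α) {S : Set ℕ} (hS : S.Infinite)
    (hf : ∀ e : Finset ℕ, ↑e ⊆ S → e.card = s → f e ∈ K) :
    ∃ M ⊆ S, M.Infinite ∧ ∃ c ∈ K, ∀ e : Finset ℕ, ↑e ⊆ M → e.card = s → f e = c := by
  induction s generalizing f S with
  | zero =>
    exact ⟨S, subset_rfl, hS, f ∅, hf ∅ (by simp) rfl, fun e _ he => by rw [card_eq_zero.mp he]⟩
  | succ s ih =>
    obtain ⟨a, ha_mono, haS, hgood⟩ := exists_strictMono_of_forall_infinite hS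
      (fun a U => ∃ c ∈ K, ∀ e : Finset ℕ, ↑e ⊆ U → e.card = s → f (insert a e) = c)
      fun T hTS hT => by
        obtain ⟨a, haT⟩ := hT.nonempty
        obtain ⟨U, hUT, hU, c, hcK, hc⟩ := ih (fun e => f (insert a e))
          (hT.sdiff (Set.finite_Iic a)) fun e he hes => by
            have ha : a ∉ e := fun hae => (he hae).2 (le_refl a)
            refine hf _ ?_ (by rw [card_insert_of_notMem ha, hes])
            rw [coe_insert, Set.insert_subset_iff]
            exact ⟨hTS haT, fun x hx => hTS (he hx).1⟩
        exact ⟨a, haT, U, hUT.trans Set.sdiff_subset, hU,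
          fun x hx => not_le.mp (hUT hx).2, c, hcK, hc⟩
    choose U hUc hU using hgood
    choose c hcK hc using hUc
    have := hK.to_subtype
    obtain ⟨⟨c₀, hc₀K⟩, hI⟩ := Finite.exists_infinite_fiber fun i => (⟨c i, hcK i⟩ : K)
    set I : Set ℕ := {i | c i = c₀}
    have hI : I.Infinite := by
      refine Set.infinite_coe_iff.mp hI |>.mono fun i hi => ?_
      simpa [I] using hi
    refine ⟨a '' I, ?_, hI.image ha_mono.injective.injOn, c₀, hc₀K, fun e he hes => ?_⟩
    · rintro _ ⟨i, -, rfl⟩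
      exact haS i
    have hne : e.Nonempty := card_pos.mp (by omega)
    obtain ⟨i, hiI, hi⟩ := he (e.min'_mem hne)
    have hrest : ↑(e.erase (a i)) ⊆ U i := by
      intro y hy
      obtain ⟨hya, hye⟩ := mem_erase.mp hy
      obtain ⟨j, -, rfl⟩ := he hye
      exact hU i j (ha_mono.lt_iff_lt.mp (lt_of_le_of_ne (hi ▸ e.min'_le _ hye) (Ne.symm hya)))
    have hmem : a i ∈ e := hi ▸ e.min'_mem hne
    rw [← insert_erase hmem, hc i _ hrest (by rw [card_erase_of_mem hmem, hes]; rfl)]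
    exact hiI

lemma factorial_mul_sum_range_choose_le (n r : ℕ) :
    r ! * ∑ j ∈ range (r + 1), n.choose j ≤ (n + r) ^ r := by
  have hvdm : ∑ j ∈ range (r + 1), n.choose j ≤ (n + r).choose r :=
    calc ∑ j ∈ range (r + 1), n.choose j
        ≤ ∑ j ∈ range (r + 1), n.choose j * r.choose (r - j) :=
          sum_le_sum fun j hj => Nat.le_mul_of_pos_right _ (Nat.choose_pos (by omega))
      _ = (n + r).choose r := by
          rw [Nat.add_choose_eq, Finset.Nat.sum_antidiagonal_eq_sum_range_succ_mk]
  calc r ! * ∑ j ∈ range (r + 1), n.choose j ≤ r ! * (n + r).choose r := by gcongr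
    _ = (n + r).descFactorial r := (Nat.descFactorial_eq_factorial_mul_choose _ _).symm
    _ ≤ (n + r) ^ r := Nat.descFactorial_le_pow _ _

section Colouring

variable {α : Type*} {r : ℕ} {Δ : Finset ℕ → α}

lemma coloursOn_mono {X Y : Set ℕ} (h : X ⊆ Y) : coloursOn r Δ X ⊆ coloursOn r Δ Y :=
  Set.image_mono fun _ he => ⟨he.1.trans h, he.2⟩

lemma coloursOn_subset {K : Set α} (hΔ : ∀ e : Finset ℕ, e.card = r → Δ e ∈ K) (X : Set ℕ) :
    coloursOn r Δ X ⊆ K := by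
  rintro _ ⟨e, ⟨-, he⟩, rfl⟩
  exact hΔ e he

lemma exists_mem_card_mul_sub_gamma_le {X : Set ℕ} (hX : (coloursOn r Δ X).Finite)
    {W : Finset ℕ} (hW : W.Nonempty) :
    ∃ w ∈ W, W.card * (gamma r Δ X - gamma r Δ (X \ {w})) ≤ r * gamma r Δ X := by
  classical
  set A := hX.toFinset
  have hγ : gamma r Δ X = A.card := Set.ncard_eq_toFinset_card _ hX
  have hrep : ∀ c ∈ A, ∃ e : Finset ℕ, (↑e ⊆ X ∧ e.card = r) ∧ Δ e = c :=
    fun c hc => hX.mem_toFinset.mp hc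
  choose! rep hrep_sub hrep using hrep
  have hlost (w : ℕ) : gamma r Δ X - gamma r Δ (X \ {w}) ≤ (A.filter (w ∈ rep ·)).card := by
    rw [gamma, gamma, ← Set.ncard_sdiff' (coloursOn_mono Set.sdiff_subset) hX,
      ← Set.ncard_coe_finset]
    refine Set.ncard_le_ncard (fun c ⟨hcX, hcw⟩ => ?_) (Set.toFinite _)
    have hcA : c ∈ A := hX.mem_toFinset.mpr hcX
    refine mem_filter.mpr ⟨hcA, by_contra fun hw => hcw ⟨rep c, ⟨?_, (hrep_sub c hcA).2⟩, ?_⟩⟩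
    · exact fun x hx => ⟨(hrep_sub c hcA).1 hx, fun hxw => hw (hxw ▸ hx)⟩
    · exact hrep c hcA
  have hsum : ∑ w ∈ W, (A.filter (w ∈ rep ·)).card ≤ r * A.card :=
    calc ∑ w ∈ W, (A.filter (w ∈ rep ·)).card = ∑ c ∈ A, (W.filter (· ∈ rep c)).card :=
          sum_card_bipartiteAbove_eq_sum_card_bipartiteBelow (fun w c => w ∈ rep c)
      _ ≤ ∑ _c ∈ A, r := sum_le_sum fun c hc =>
          (card_le_card fun _ hw => (mem_filter.mp hw).2).trans (hrep_sub c hc).2.le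
      _ = r * A.card := by rw [sum_const, smul_eq_mul, mul_comm]
  refine exists_le_of_sum_le hW ?_
  rw [← mul_sum, sum_const, smul_eq_mul, hγ]
  rw [hγ] at hlost
  exact Nat.mul_le_mul_left _ ((sum_le_sum fun w _ => hlost w).trans hsum)

/-- For `M` disjoint from `W`: the colour of an `r`-set `e ⊆ W ∪ M` is `col (e ∩ W)`. -/
def IsCanonical (r : ℕ) (Δ : Finset ℕ → α) (W : Finset ℕ) (M : Set ℕ) : Prop :=
  ∃ col : Finset ℕ → α, ∀ T ⊆ W, ∀ u : Finset ℕ, ↑u ⊆ M → T.card + u.card = r →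
    Δ (T ∪ u) = col T

lemma IsCanonical.mono {W V : Finset ℕ} {M : Set ℕ} (h : IsCanonical r Δ W M) (hVW : V ⊆ W) :
    IsCanonical r Δ V M :=
  let ⟨col, hcol⟩ := h
  ⟨col, fun T hTV => hcol T (hTV.trans hVW)⟩

lemma exists_infinite_isCanonical {K : Set α} (hK : K.Finite)
    (hΔ : ∀ e : Finset ℕ, e.card = r → Δ e ∈ K) (W : Finset ℕ) :
    ∃ M : Set ℕ, M.Infinite ∧ IsCanonical r Δ W M := by
  suffices h : ∀ 𝒯 ⊆ W.powerset.filter (·.card ≤ r), ∃ M : Set ℕ, M ⊆ (↑W)ᶜ ∧ M.Infinite ∧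
      ∃ col : Finset ℕ → α, ∀ T ∈ 𝒯, ∀ u : Finset ℕ, ↑u ⊆ M → T.card + u.card = r →
        Δ (T ∪ u) = col T by
    obtain ⟨M, -, hM, col, hcol⟩ := h _ subset_rfl
    exact ⟨M, hM, col, fun T hTW u hu hTu => hcol T (by simp [hTW, ← hTu]) u hu hTu⟩
  intro 𝒯 h𝒯
  induction 𝒯 using Finset.induction_on with
  | empty => exact ⟨_, subset_rfl, W.finite_toSet.infinite_compl, fun _ => Δ ∅, by simp⟩
  | insert T₀ 𝒯 _ ih =>
    obtain ⟨M, hMW, hM, col, hcol⟩ := ih ((subset_insert _ _).trans h𝒯)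
    obtain ⟨hT₀W, hT₀r⟩ : T₀ ⊆ W ∧ T₀.card ≤ r := by simpa using h𝒯 (mem_insert_self _ _)
    have hdisj {u : Finset ℕ} (hu : ↑u ⊆ M) : Disjoint T₀ u :=
      disjoint_left.mpr fun x hxT hxu => hMW (hu hxu) (hT₀W hxT)
    obtain ⟨M', hM'M, hM', c, -, hc⟩ := exists_infinite_monochromatic hK (r - T₀.card)
      (fun u => Δ (T₀ ∪ u)) hM fun u hu hus =>
        hΔ _ (by rw [card_union_of_disjoint (hdisj hu)]; omega)
    refine ⟨M', hM'M.trans hMW, hM', Function.update col T₀ c, fun T hT u hu hTu => ?_⟩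
    rcases mem_insert.mp hT with rfl | hT
    · rw [Function.update_self]
      exact hc u hu (by omega)
    · rw [Function.update_of_ne (by rintro rfl; contradiction)]
      exact hcol T hT u (hu.trans hM'M) hTu

lemma IsCanonical.gamma_le {W : Finset ℕ} {M : Set ℕ} (h : IsCanonical r Δ W M) :
    gamma r Δ (↑W ∪ M) ≤ ∑ j ∈ range (r + 1), W.card.choose j := by
  classical
  obtain ⟨col, hcol⟩ := h
  calc gamma r Δ (↑W ∪ M)
      ≤ (((range (r + 1)).biUnion (W.powersetCard ·)).image col).card := by
        rw [gamma, ← Set.ncard_coe_finset]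
        refine Set.ncard_le_ncard ?_ (Set.toFinite _)
        rintro _ ⟨e, ⟨heX, her⟩, rfl⟩
        have hsplit := card_inter_add_card_sdiff e W
        have hcol_e := hcol (e ∩ W) inter_subset_right (e \ W) ?_ (hsplit.trans her)
        · rw [union_comm, sdiff_union_inter] at hcol_e
          rw [hcol_e]
          simp only [coe_image, Set.mem_image, mem_coe, mem_biUnion, mem_range, mem_powersetCard]
          exact ⟨e ∩ W, ⟨_, by omega, inter_subset_right, rfl⟩, rfl⟩
        · intro x hx
          obtain ⟨hxe, hxW⟩ := mem_sdiff.mp hx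
          exact (heX hxe).resolve_left hxW
    _ ≤ ((range (r + 1)).biUnion (W.powersetCard ·)).card := card_image_le
    _ ≤ ∑ j ∈ range (r + 1), W.card.choose j :=
        card_biUnion_le.trans_eq (sum_congr rfl fun j _ => card_powersetCard _ _)

lemma exists_subset_forall_erase_lt {W₀ : Finset ℕ} {M : Set ℕ} {m : ℕ}
    (hW₀ : m ≤ gamma r Δ (↑W₀ ∪ M)) :
    ∃ W ⊆ W₀, m ≤ gamma r Δ (↑W ∪ M) ∧ ∀ w ∈ W, gamma r Δ (↑(W.erase w) ∪ M) < m := by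
  classical
  obtain ⟨W, hW, hmin⟩ := exists_min_image
    (W₀.powerset.filter fun W : Finset ℕ => m ≤ gamma r Δ (↑W ∪ M)) card ⟨W₀, by simpa using hW₀⟩
  obtain ⟨hWW₀, hmW⟩ : W ⊆ W₀ ∧ m ≤ gamma r Δ (↑W ∪ M) := by simpa using hW
  refine ⟨W, hWW₀, hmW, fun w hw => ?_⟩
  by_contra! h
  have := hmin (W.erase w) (mem_filter.mpr ⟨mem_powerset.mpr ((erase_subset w W).trans hWW₀), h⟩)
  rw [card_erase_of_mem hw] at this
  have := card_pos.mpr ⟨w, hw⟩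
  omega

lemma exists_gamma_gap {K : Set α} (hK : K.Finite) (hΔ : ∀ e : Finset ℕ, e.card = r → Δ e ∈ K)
    {m : ℕ} (hm : 1 ≤ m) {W₀ : Finset ℕ} (hW₀ : m ≤ gamma r Δ ↑W₀) :
    m ∈ Fdelta r Δ ∨ ∃ n γ γ', γ ∈ Fdelta r Δ ∧ γ' ∈ Fdelta r Δ ∧ γ' < m ∧ m ≤ γ ∧
      n * (γ - γ') ≤ r * γ ∧ r ! * γ ≤ (n + r) ^ r := by
  have hfin (X : Set ℕ) : (coloursOn r Δ X).Finite := hK.subset (coloursOn_subset hΔ X)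
  have hγ_mono {X Y : Set ℕ} (h : X ⊆ Y) : gamma r Δ X ≤ gamma r Δ Y :=
    Set.ncard_le_ncard (coloursOn_mono h) (hfin Y)
  obtain ⟨M, hM, hcan⟩ := exists_infinite_isCanonical hK hΔ W₀
  have hmem (W : Finset ℕ) : gamma r Δ (↑W ∪ M) ∈ Fdelta r Δ :=
    ⟨_, hM.mono Set.subset_union_right, rfl⟩
  obtain ⟨W, hWW₀, hmW, hmin⟩ :=
    exists_subset_forall_erase_lt (M := M) (hW₀.trans (hγ_mono Set.subset_union_left))
  have hγW := (hcan.mono hWW₀).gamma_le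
  rcases W.eq_empty_or_nonempty with rfl | hne
  · left
    have hF := hmem ∅
    simp only [coe_empty, Set.empty_union] at hF hmW hγW
    have hγ1 : gamma r Δ M ≤ 1 := by simpa [sum_range_succ'] using hγW
    exact (show gamma r Δ M = m by omega) ▸ hF
  · right
    obtain ⟨w, hw, hkey⟩ := exists_mem_card_mul_sub_gamma_le (hfin (↑W ∪ M)) hne
    have hdel : (↑W ∪ M) \ {w} ⊆ ↑(W.erase w) ∪ M := by
      rw [coe_erase, Set.union_sdiff_distrib]
      exact Set.union_subset_union_right _ Set.sdiff_subset
    refine ⟨W.card, _, _, hmem W, hmem (W.erase w), hmin w hw, hmW, ?_, ?_⟩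
    · exact le_trans (Nat.mul_le_mul_left _ (Nat.sub_le_sub_left (hγ_mono hdel) _)) hkey
    · exact (Nat.mul_le_mul_left _ hγW).trans (factorial_mul_sum_range_choose_le _ _)

end Colouring

lemma div_mul_rpow_one_div_eq (r : ℕ) {c x : ℝ} (hc : 0 ≤ c) (hx : 0 < x) :
    x / (c * x) ^ ((1 : ℝ) / r) = x ^ (1 - 1 / (r : ℝ)) / c ^ ((1 : ℝ) / r) := by
  rw [Real.mul_rpow hc hx.le, Real.rpow_sub hx, Real.rpow_one]
  field_simp

lemma div_mul_rpow_one_div_sq_le (r : ℕ) {c x : ℝ} (hc : 1 ≤ c) (hx : 0 < x) :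
    x / ((c * x) ^ ((1 : ℝ) / r)) ^ 2 ≤ x ^ (1 - 2 / (r : ℝ)) := by
  have hx2 : x ^ (1 - 2 / (r : ℝ)) = x / (x ^ ((1 : ℝ) / r)) ^ 2 := by
    rw [Real.rpow_sub hx, Real.rpow_one, ← Real.rpow_natCast, ← Real.rpow_mul hx.le]
    congr 2; push_cast; ring
  rw [hx2, Real.mul_rpow (by positivity) hx.le, mul_pow]
  gcongr
  exact le_mul_of_one_le_left (by positivity) (one_le_pow₀ (Real.one_le_rpow hc (by positivity)))

lemma abs_sub_le_half_or {a x b : ℝ} (hax : a ≤ x) (hxb : x ≤ b) :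
    |x - b| ≤ (b - a) / 2 ∨ |x - a| ≤ (b - a) / 2 := by
  rcases le_total (a + b) (2 * x) with h | h
  · left; rw [abs_of_nonpos (by linarith)]; linarith
  · right; rw [abs_of_nonneg (by linarith)]; linarith

lemma le_div_add_div_sq_of_mul_sub_le {a b d q : ℝ} (ha : 0 < a) (hd : 0 ≤ d) (hq : 4 * a ≤ q)
    (h : d * (q - 2 * a) ≤ a * b) : d ≤ a * b / q + 4 * a ^ 2 * b / q ^ 2 := by
  have hq0 : 0 < q := by linarith
  -- `q ≤ 2 (q - 2a)` turns the hypothesis into `d q ≤ 2 a b`, which bounds the error term.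
  have hdq : d * q ≤ 2 * (a * b) := by
    nlinarith [mul_le_mul_of_nonneg_left (show q ≤ 2 * (q - 2 * a) by linarith) hd]
  rw [div_add_div _ _ hq0.ne' (by positivity), le_div_iff₀ (by positivity)]
  nlinarith [mul_le_mul_of_nonneg_left h hq0.le, mul_le_mul_of_nonneg_left hdq ha.le]

lemma abs_sub_le_of_gap {r n m γ γ' : ℕ} (hr : 2 ≤ r) (hm : 1 ≤ m) (hγ' : γ' ≤ m) (hγ : m ≤ γ)
    (hgap : n * (γ - γ') ≤ r * γ) (hcount : r ! * m ≤ (n + r) ^ r) :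
    let B : ℝ := (r : ℝ) / (2 * (r ! : ℝ) ^ ((1 : ℝ) / r)) * (m : ℝ) ^ (1 - 1 / (r : ℝ)) +
      ((4 * r) ^ r + 2 * r ^ 2) * (m : ℝ) ^ (1 - 2 / (r : ℝ))
    |(m : ℝ) - γ| ≤ B ∨ |(m : ℝ) - γ'| ≤ B := by
  intro B
  have hm0 : (0 : ℝ) < m := by exact_mod_cast hm
  have hr0 : (0 : ℝ) < r := by positivity
  have hfact : (1 : ℝ) ≤ r ! := mod_cast Nat.factorial_pos r
  have hγ'R : (γ' : ℝ) ≤ m := by exact_mod_cast hγ'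
  have hγR : (m : ℝ) ≤ γ := by exact_mod_cast hγ
  have hm2 : 1 ≤ (m : ℝ) ^ (1 - 2 / (r : ℝ)) := by
    refine Real.one_le_rpow (by exact_mod_cast hm) ?_
    rw [sub_nonneg, div_le_one hr0]; exact_mod_cast hr
  have hB₁ : 0 ≤ (r : ℝ) / (2 * (r ! : ℝ) ^ ((1 : ℝ) / r)) * (m : ℝ) ^ (1 - 1 / (r : ℝ)) := by
    positivity
  set q := ((r ! : ℝ) * m) ^ ((1 : ℝ) / r) with hq
  have hq0 : 0 < q := by positivity
  have hqr : q ^ r = r ! * m := by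
    rw [hq, one_div]; exact Real.rpow_inv_natCast_pow (by positivity) (by omega)
  have hqn : q ≤ n + r :=
    le_of_pow_le_pow_left₀ (by omega : r ≠ 0) (by positivity) (by rw [hqr]; exact_mod_cast hcount)
  have hgapR : ((n : ℝ) - r) * (γ - γ') ≤ r * m := by
    have := (Nat.cast_le (α := ℝ)).mpr hgap
    push_cast [Nat.cast_sub (hγ'.trans hγ)] at this
    nlinarith
  rcases lt_or_ge q (4 * r) with hsmall | hlarge
  · right
    have hm_le : (m : ℝ) ≤ (4 * r) ^ r :=
      calc (m : ℝ) ≤ r ! * m := le_mul_of_one_le_left hm0.le hfact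
        _ = q ^ r := hqr.symm
        _ ≤ (4 * r) ^ r := pow_le_pow_left₀ hq0.le hsmall.le r
    rw [abs_of_nonneg (by linarith)]
    simp only [B]
    nlinarith [Nat.cast_nonneg (α := ℝ) γ']
  · have hd := le_div_add_div_sq_of_mul_sub_le hr0 (sub_nonneg.mpr (hγ'R.trans hγR)) hlarge
      (by nlinarith : ((γ : ℝ) - γ') * (q - 2 * r) ≤ r * m)
    have hfirst : (r : ℝ) * m / q / 2 =
        r / (2 * (r ! : ℝ) ^ ((1 : ℝ) / r)) * (m : ℝ) ^ (1 - 1 / (r : ℝ)) := by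
      rw [mul_div_assoc, hq, div_mul_rpow_one_div_eq r (by positivity) hm0]
      field_simp
    have hsecond : (m : ℝ) / q ^ 2 ≤ (m : ℝ) ^ (1 - 2 / (r : ℝ)) :=
      div_mul_rpow_one_div_sq_le r hfact hm0
    have hB : ((γ : ℝ) - γ') / 2 ≤ B := by
      have : 4 * (r : ℝ) ^ 2 * m / q ^ 2 / 2 ≤ 2 * r ^ 2 * (m : ℝ) ^ (1 - 2 / (r : ℝ)) := by
        rw [mul_div_assoc, mul_div_assoc]; nlinarith
      simp only [B]
      nlinarith [pow_nonneg (by positivity : (0 : ℝ) ≤ 4 * r) r]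
    exact (abs_sub_le_half_or hγ'R hγR).imp (·.trans hB) (·.trans hB)

lemma IsColouring.exists_le_gamma {r k : ℕ} {Δ : Finset ℕ → ℕ} (hΔ : IsColouring r k Δ) :
    ∃ W : Finset ℕ, k ≤ gamma r Δ ↑W := by
  classical
  choose! rep hrep_card hrep using hΔ.2
  refine ⟨(Icc 1 k).biUnion rep, ?_⟩
  have hsub : ↑(Icc 1 k) ⊆ coloursOn r Δ ↑((Icc 1 k).biUnion rep) := fun c hc =>
    ⟨rep c, ⟨coe_subset.mpr (subset_biUnion_of_mem rep hc), hrep_card c hc⟩, hrep c hc⟩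
  calc k = (↑(Icc 1 k) : Set ℕ).ncard := by simp
    _ ≤ gamma r Δ _ :=
      Set.ncard_le_ncard hsub ((Icc 1 k).finite_toSet.subset (coloursOn_subset hΔ.1 _))

/-- **Theorem 1 (approximation theorem).** For every `r ≥ 2` there is a constant `C_r` such
that for every surjective colouring `Δ : ℕ^(r) ↠ [k]` and every natural number `m ≤ k` there
is `m' ∈ F_Δ` with `|m - m'| ≤ (r / (2 (r!)^(1/r))) m^(1-1/r) + C_r m^(1-2/r)`. -/
theorem approx_m_coloured (r : ℕ) (hr : 2 ≤ r) :
    ∃ C : ℝ, ∀ (k : ℕ) (Δ : Finset ℕ → ℕ), IsColouring r k Δ →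
      ∀ m : ℕ, 1 ≤ m → m ≤ k →
        ∃ m' ∈ Fdelta r Δ,
          |(m : ℝ) - (m' : ℝ)| ≤
            ((r : ℝ) / (2 * ((Nat.factorial r : ℝ)) ^ ((1 : ℝ) / r))) *
                (m : ℝ) ^ (1 - 1 / (r : ℝ))
              + C * (m : ℝ) ^ (1 - 2 / (r : ℝ)) := by
  refine ⟨(4 * r) ^ r + 2 * r ^ 2, fun k Δ hΔ m hm hmk => ?_⟩
  obtain ⟨W₀, hW₀⟩ := hΔ.exists_le_gamma
  rcases exists_gamma_gap (Icc 1 k).finite_toSet hΔ.1 hm (hmk.trans hW₀) with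
    hmF | ⟨n, γ, γ', hγF, hγ'F, hγ'm, hmγ, hgap, hcount⟩
  · exact ⟨m, hmF, by rw [sub_self, abs_zero]; positivity⟩
  · rcases abs_sub_le_of_gap hr hm hγ'm.le hmγ hgap
      ((Nat.mul_le_mul_left _ hmγ).trans hcount) with h | h
    · exact ⟨γ, hγF, h⟩
    · exact ⟨γ', hγ'F, h⟩
end

section
/- For every natural number k, every surjective colouring Δ: ℕ^(2) ↠ [k], and every natural number m with m ≤ k, there exists m' ∈ F_Δ such that |m - m'| ≤ √(m/2) + 1/2. -/
open Finset

/-!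
Fix pairs realising the colours `1, …, m` and let `S₀` be the set of their vertices. Along a
non-principal ultrafilter one finds an infinite `Z`, disjoint from `S₀`, all of whose pairs have
one colour `d` and such that each `s ∈ S₀` sends one colour `col s` to every point of `Z`. For
`S ⊆ S₀` the colours of `S ∪ Z` are then the colours of the pairs in `S`, the colours `col s` for
`s ∈ S`, and `d`; there are at least `m` of them for `S = S₀` and exactly one for `S = ∅`.

Now delete the vertices of `S₀` one at a time. Every colour other than `d` is witnessed by at most
two vertices of `S`, so by double counting, deleting a suitable vertex of `S` costs only `l`
colours with `|S| l ≤ 2 (v - 1)`, where `v` is the current number of colours; with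
`v ≤ 1 + (|S| + 1).choose 2` this gives `l (l - 1) ≤ 2 (v - 1)`. While `v > m + √(m/2) + 1/2`, this bound keeps
`v - l ≥ m - √(m/2) - 1/2`, so the count cannot jump over the window around `m`.
-/

open Filter

theorem Ultrafilter.exists_infinite_pairwise {α : Type*} {U : Ultrafilter α}
    (hU : (U : Filter α) ≤ cofinite) {r : α → α → Prop} (hr : ∀ x y, r x y → r y x)
    {G : Set α} (hG : G ∈ U) (hrG : ∀ x ∈ G, ∀ᶠ y in U, r x y) :
    ∃ Z ⊆ G, Z.Infinite ∧ Z.Pairwise r := by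
  obtain ⟨f, hfG, hf⟩ := exists_seq_of_forall_finset_exists (· ∈ G) (fun x y => x ≠ y ∧ r x y)
    fun s hs => by
      have hy : ∀ᶠ y in U, y ∈ G ∧ y ∉ s ∧ ∀ x ∈ s, r x y :=
        Eventually.and hG <| Eventually.and (hU s.finite_toSet.compl_mem_cofinite) <|
          (eventually_all_finset s).2 fun x hx => hrG x (hs x hx)
      obtain ⟨y, hyG, hys, hyr⟩ := hy.exists
      exact ⟨y, hyG, fun x hx => ⟨ne_of_mem_of_not_mem hx hys, hyr x hx⟩⟩
  have hinj : f.Injective := .of_lt_imp_ne fun m n h => (hf m n h).1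
  refine ⟨Set.range f, Set.range_subset_iff.2 hfG, Set.infinite_range_of_injective hinj, ?_⟩
  rintro _ ⟨m, rfl⟩ _ ⟨n, rfl⟩ hmn
  rcases lt_or_gt_of_ne (hinj.ne_iff.1 hmn) with h | h
  exacts [(hf m n h).2, hr _ _ (hf n m h).2]

theorem exists_infinite_homogeneous {α β : Type*} [Infinite α] [DecidableEq α]
    {Δ : Finset α → β} {t : Set β} (ht : t.Finite) (hΔ : ∀ e : Finset α, e.card = 2 → Δ e ∈ t)
    (S : Finset α) :
    ∃ (col : α → β) (d : β) (Z : Set α), Z.Infinite ∧ Disjoint (S : Set α) Z ∧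
      Z.Pairwise (fun x y => Δ {x, y} = d) ∧ ∀ s ∈ S, ∀ z ∈ Z, Δ {s, z} = col s := by
  set U := hyperfilter α
  have hlim : ∀ x, ∃ b ∈ t, ∀ᶠ y in U, Δ {x, y} = b := fun x =>
    (Ultrafilter.eventually_exists_mem_iff ht).1 <| by
      filter_upwards [compl_mem_hyperfilter_of_finite (Set.finite_singleton x)] with y hy
      exact ⟨_, hΔ _ (card_pair (Ne.symm hy)), rfl⟩
  choose col hcol_mem hcol using hlim
  obtain ⟨d, -, hd⟩ := (Ultrafilter.eventually_exists_mem_iff (P := fun b x => col x = b) ht).1 <|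
    Eventually.of_forall fun x => ⟨col x, hcol_mem x, rfl⟩
  have hG : ∀ᶠ y in U, (y ∉ S ∧ ∀ s ∈ S, Δ {s, y} = col s) ∧ col y = d :=
    Eventually.and (Eventually.and (compl_mem_hyperfilter_of_finite S.finite_toSet)
      ((eventually_all_finset S).2 fun s _ => hcol s)) hd
  obtain ⟨Z, hZG, hZ, hZd⟩ := Ultrafilter.exists_infinite_pairwise hyperfilter_le_cofinite
    (r := fun x y => Δ {x, y} = d) (fun x y h => by rwa [pair_comm]) hG
    fun x hx => (hcol x).mono fun y hy => hy.trans hx.2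
  exact ⟨col, d, Z, hZ, Set.disjoint_right.2 fun z hz => (hZG hz).1.1,
    hZd, fun s hs z hz => (hZG hz).1.2 s hs⟩

theorem Finset.exists_subset_mem_Icc_of_exists_erase {α γ : Type*} [DecidableEq α]
    [LinearOrder γ] {f : Finset α → γ} {lo hi : γ}
    (hstep : ∀ S, hi < f S → ∃ x ∈ S, lo ≤ f (S.erase x))
    (S : Finset α) (hS : lo ≤ f S) : ∃ T ⊆ S, f T ∈ Set.Icc lo hi := by
  induction S using Finset.strongInduction with
  | H S ih =>
    by_cases hhi : f S ≤ hi
    · exact ⟨S, subset_rfl, hS, hhi⟩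
    obtain ⟨x, hx, hx_lo⟩ := hstep S (not_le.1 hhi)
    obtain ⟨T, hT, hT_mem⟩ := ih _ (erase_ssubset hx) hx_lo
    exact ⟨T, hT.trans (erase_subset x S), hT_mem⟩

theorem sub_le_sub_of_mul_sub_one_le {m v l : ℝ} (hm : 0 ≤ m)
    (hv : m + (√(m / 2) + 1 / 2) < v) (hl : l * (l - 1) ≤ 2 * (v - 1)) :
    m - (√(m / 2) + 1 / 2) ≤ v - l := by
  have ht : √(m / 2) ^ 2 = m / 2 := Real.sq_sqrt (by positivity)
  have ht0 : 0 ≤ √(m / 2) := Real.sqrt_nonneg _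
  generalize √(m / 2) = t at *
  by_contra! h
  have hlu : 0 < (l - (v - m + t + 1 / 2)) * (l + (v - m + t + 1 / 2) - 1) :=
    mul_pos (by linarith) (by linarith)
  have htw : 0 ≤ t * (v - m - t - 1 / 2) := mul_nonneg ht0 (by linarith)
  nlinarith [sq_nonneg (v - m - t - 1)]

section ConfigColours

variable {α β : Type*} [DecidableEq β]

/-- The colours attained on `S ∪ Z` when all pairs in `Z` have colour `d` and every `s ∈ S` sends
colour `col s` to every point of `Z`. -/
def configColours (Δ : Finset α → β) (col : α → β) (d : β) (S : Finset α) : Finset β :=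
  (S.powersetCard 2).image Δ ∪ S.image col ∪ {d}

variable {Δ : Finset α → β} {col : α → β} {d : β} {S T : Finset α}

theorem configColours_mono (h : S ⊆ T) : configColours Δ col d S ⊆ configColours Δ col d T :=
  union_subset_union (union_subset_union (image_subset_image (powersetCard_mono h))
    (image_subset_image h)) subset_rfl

@[simp]
theorem configColours_empty : configColours Δ col d ∅ = {d} := by
  simp [configColours, powersetCard_eq_empty.2 (show #(∅ : Finset α) < 2 by simp)]

theorem d_mem_configColours : d ∈ configColours Δ col d S := by
  simp [configColours]

theorem apply_mem_configColours {p : Finset α} (hp : p ⊆ S) (hp2 : #p = 2) :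
    Δ p ∈ configColours Δ col d S := by
  simp only [configColours, mem_union, mem_image, mem_powersetCard]
  exact Or.inl (Or.inl ⟨p, ⟨hp, hp2⟩, rfl⟩)

theorem col_mem_configColours {s : α} (hs : s ∈ S) : col s ∈ configColours Δ col d S := by
  simp only [configColours, mem_union, mem_image]
  exact Or.inl (Or.inr ⟨s, hs, rfl⟩)

variable (Δ col d S) in
theorem card_configColours_le : #(configColours Δ col d S) ≤ (#S + 1).choose 2 + 1 := by
  calc #(configColours Δ col d S)
      ≤ #((S.powersetCard 2).image Δ) + #(S.image col) + #{d} :=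
        (card_union_le _ _).trans (Nat.add_le_add_right (card_union_le _ _) _)
    _ ≤ (#S).choose 2 + #S + 1 := by
        gcongr
        · exact card_image_le.trans (card_powersetCard 2 S).le
        · exact card_image_le
        · exact (card_singleton d).le
    _ = (#S + 1).choose 2 + 1 := by
        rw [Nat.choose_succ_succ', Nat.choose_one_right, add_comm (#S)]

theorem exists_subset_card_le_two_of_mem_configColours {c : β}
    (hc : c ∈ configColours Δ col d S) :
    ∃ W ⊆ S, #W ≤ 2 ∧ c ∈ configColours Δ col d W := by
  simp only [configColours, mem_union, mem_image, mem_powersetCard, mem_singleton] at hc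
  rcases hc with (⟨p, ⟨hp, hp2⟩, rfl⟩ | ⟨s, hs, rfl⟩) | rfl
  · exact ⟨p, hp, hp2.le, apply_mem_configColours subset_rfl hp2⟩
  · exact ⟨{s}, singleton_subset_iff.2 hs, by simp, col_mem_configColours (mem_singleton_self s)⟩
  · exact ⟨∅, empty_subset S, by simp, d_mem_configColours⟩

variable (Δ col d) in
theorem exists_mem_card_mul_card_sdiff_configColours_erase_le [DecidableEq α] (hS : S.Nonempty) :
    ∃ x ∈ S, #S * #(configColours Δ col d S \ configColours Δ col d (S.erase x)) ≤
      2 * (#(configColours Δ col d S) - 1) := by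
  set C := configColours Δ col d
  obtain ⟨x, hx, hmin⟩ := S.exists_min_image (fun x => #(C S \ C (S.erase x))) hS
  refine ⟨x, hx, ?_⟩
  rw [← card_erase_of_mem d_mem_configColours, mul_comm 2]
  refine card_mul_le_card_mul (fun y c => c ∉ C (S.erase y)) (fun y hy => ?_) fun c hc => ?_
  · refine (hmin y hy).trans (card_le_card fun c hc => ?_)
    obtain ⟨hcS, hcy⟩ := mem_sdiff.1 hc
    exact (mem_bipartiteAbove _).2
      ⟨mem_erase.2 ⟨fun h => hcy (h ▸ d_mem_configColours), hcS⟩, hcy⟩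
  · obtain ⟨W, hWS, hW, hcW⟩ :=
      exists_subset_card_le_two_of_mem_configColours (mem_of_mem_erase hc)
    refine (card_le_card fun y hy => ?_).trans hW
    obtain ⟨-, hcy⟩ := (mem_bipartiteBelow _).1 hy
    by_contra hyW
    exact hcy (configColours_mono (subset_erase.2 ⟨hWS, hyW⟩) hcW)

variable (Δ col d) in
theorem exists_mem_configColours_erase_mul_sub_one_le [DecidableEq α] (hS : S.Nonempty) :
    ∃ x ∈ S, ∃ l, #(configColours Δ col d S) = #(configColours Δ col d (S.erase x)) + l ∧
      l * (l - 1) ≤ 2 * (#(configColours Δ col d S) - 1) := by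
  obtain ⟨x, hx, hloss⟩ := exists_mem_card_mul_card_sdiff_configColours_erase_le Δ col d hS
  set l := #(configColours Δ col d S \ configColours Δ col d (S.erase x))
  have hsub := configColours_mono (Δ := Δ) (col := col) (d := d) (erase_subset x S)
  have hl_eq : l = _ := card_sdiff_of_subset hsub
  refine ⟨x, hx, l, by have := card_le_card hsub; omega, ?_⟩
  have htri : 2 * ((#S + 1).choose 2) = (#S + 1) * #S := by
    rw [mul_comm, ← Nat.add_one_mul_choose_eq, Nat.choose_one_right]
  have hl : l ≤ #S + 1 := by
    refine Nat.le_of_mul_le_mul_left ?_ hS.card_pos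
    have := card_configColours_le Δ col d S
    calc #S * l ≤ 2 * (#(configColours Δ col d S) - 1) := hloss
      _ ≤ 2 * ((#S + 1).choose 2) := by omega
      _ = #S * (#S + 1) := by rw [htri, mul_comm]
  calc l * (l - 1) ≤ l * #S := Nat.mul_le_mul_left l (by omega)
    _ = #S * l := mul_comm _ _
    _ ≤ _ := hloss

theorem exists_mem_le_card_configColours_erase [DecidableEq α] {m : ℝ} (hm : 1 ≤ m)
    (hS : m + (√(m / 2) + 1 / 2) < #(configColours Δ col d S)) :
    ∃ x ∈ S, m - (√(m / 2) + 1 / 2) ≤ #(configColours Δ col d (S.erase x)) := by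
  have hS_ne : S.Nonempty := by
    rw [nonempty_iff_ne_empty]
    rintro rfl
    simp only [configColours_empty, card_singleton, Nat.cast_one] at hS
    linarith [Real.sqrt_nonneg (m / 2)]
  obtain ⟨x, hx, l, hcard, hl⟩ := exists_mem_configColours_erase_mul_sub_one_le Δ col d hS_ne
  refine ⟨x, hx, ?_⟩
  have hv1 : 1 ≤ #(configColours Δ col d S) := card_pos.2 ⟨d, d_mem_configColours⟩
  have hl1 : (l : ℝ) * (l - 1) ≤ 2 * (#(configColours Δ col d S) - 1) := by
    rcases Nat.eq_zero_or_pos l with rfl | hl0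
    · simpa using (Nat.one_le_cast (α := ℝ)).2 hv1
    · have := (Nat.cast_le (α := ℝ)).2 hl
      push_cast [Nat.cast_sub hl0, Nat.cast_sub hv1] at this
      exact this
  have := sub_le_sub_of_mul_sub_one_le (by linarith) hS hl1
  rw [hcard, Nat.cast_add] at this
  linarith

end ConfigColours

theorem coloursOn_two_union_eq_configColours {β : Type*} [DecidableEq β] {Δ : Finset ℕ → β}
    {col : ℕ → β} {d : β} {S : Finset ℕ} {Z : Set ℕ} (hZ : Z.Infinite)
    (hSZ : Disjoint (S : Set ℕ) Z)
    (hZd : Z.Pairwise fun x y => Δ {x, y} = d) (hcol : ∀ s ∈ S, ∀ z ∈ Z, Δ {s, z} = col s) :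
    coloursOn 2 Δ (S ∪ Z) = configColours Δ col d S := by
  ext c
  simp only [coloursOn, Set.mem_image, Set.mem_ofPred_eq, configColours, mem_coe, mem_union,
    mem_image, mem_powersetCard, mem_singleton]
  constructor
  · rintro ⟨e, ⟨he, he2⟩, rfl⟩
    obtain ⟨x, y, hxy, rfl⟩ := card_eq_two.1 he2
    have hx : x ∈ (S : Set ℕ) ∪ Z := he (by simp)
    have hy : y ∈ (S : Set ℕ) ∪ Z := he (by simp)
    rcases hx with hx | hx <;> rcases hy with hy | hy
    · exact Or.inl (Or.inl ⟨{x, y}, ⟨insert_subset hx (singleton_subset_iff.2 hy), he2⟩, rfl⟩)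
    · exact Or.inl (Or.inr ⟨x, hx, (hcol x hx y hy).symm⟩)
    · exact Or.inl (Or.inr ⟨y, hy, by rw [pair_comm, hcol y hy x hx]⟩)
    · exact Or.inr (hZd hx hy hxy)
  · rintro ((⟨p, ⟨hp, hp2⟩, rfl⟩ | ⟨s, hs, rfl⟩) | rfl)
    · exact ⟨p, ⟨Set.subset_union_of_subset_left (coe_subset.2 hp) Z, hp2⟩, rfl⟩
    · obtain ⟨z, hz⟩ := hZ.nonempty
      have hsz : s ≠ z := fun h => Set.disjoint_left.1 hSZ hs (h ▸ hz)
      refine ⟨{s, z}, ⟨?_, card_pair hsz⟩, hcol s hs z hz⟩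
      simp [Set.insert_subset_iff, hs, hz]
    · obtain ⟨x, hx, y, hy, hxy⟩ := hZ.nontrivial
      refine ⟨{x, y}, ⟨?_, card_pair hxy⟩, hZd hx hy hxy⟩
      simp [Set.insert_subset_iff, hx, hy]

/-- For graphs (`r = 2`): for every surjective colouring `Δ : ℕ^(2) ↠ [k]` and every natural
number `m ≤ k` there is `m' ∈ F_Δ` with `|m - m'| ≤ √(m/2) + 1/2`. -/
theorem approx_m_coloured_graphs (k : ℕ) (Δ : Finset ℕ → ℕ) (hΔ : IsColouring 2 k Δ)
    (m : ℕ) (hm : 1 ≤ m) (hmk : m ≤ k) :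
    ∃ m' ∈ Fdelta 2 Δ,
      |(m : ℝ) - (m' : ℝ)| ≤ Real.sqrt ((m : ℝ) / 2) + 1 / 2 := by
  obtain ⟨hΔ_mem, hΔ_surj⟩ := hΔ
  choose! g hg_card hg using fun c (hc : c ∈ Icc 1 m) => hΔ_surj c (Icc_subset_Icc_right hmk hc)
  set S₀ := (Icc 1 m).biUnion g
  obtain ⟨col, d, Z, hZ, hS₀Z, hZd, hcol⟩ :=
    exists_infinite_homogeneous (Icc 1 k).finite_toSet hΔ_mem S₀
  have hm_le : (m : ℝ) ≤ #(configColours Δ col d S₀) := by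
    have : Icc 1 m ⊆ configColours Δ col d S₀ := fun c hc =>
      hg c hc ▸ apply_mem_configColours (subset_biUnion_of_mem g hc) (hg_card c hc)
    simpa using card_le_card this
  obtain ⟨T, hT, hT_lo, hT_hi⟩ := Finset.exists_subset_mem_Icc_of_exists_erase
    (f := fun T => (#(configColours Δ col d T) : ℝ)) (lo := m - (√(m / 2) + 1 / 2))
    (fun _ hS => exists_mem_le_card_configColours_erase (Nat.one_le_cast.2 hm) hS) S₀
    (by linarith [Real.sqrt_nonneg ((m : ℝ) / 2)])
  have hγ : gamma 2 Δ (T ∪ Z) = #(configColours Δ col d T) := by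
    rw [gamma, coloursOn_two_union_eq_configColours hZ (hS₀Z.mono_left (coe_subset.2 hT)) hZd
      fun s hs => hcol s (hT hs), Set.ncard_coe_finset]
  exact ⟨_, ⟨T ∪ Z, hZ.mono Set.subset_union_right, hγ⟩, abs_le.2 ⟨by linarith, by linarith⟩⟩
end

section
/- Let r ≥ 2 and a ≥ r be integers and let Δ: ℕ^(r) ↠ [C(a,r)+1] be a surjective colouring for which F_Δ = { C(n,r) + 1 : n ≤ a }. Then for every integer l with r ≤ l < a such that C(l,r) + C(l+1,r) is even, setting m = (C(l,r) + C(l+1,r) + 2)/2, every m' ∈ F_Δ satisfies |m - m'| ≥ C(l,r-1)/2. -/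
/-!
The values in `F_Δ` are `C(n,r) + 1`, and `n ↦ C(n,r)` is monotone, so no value lies strictly
between `C(l,r) + 1` and `C(l+1,r) + 1`. The number `m` is the midpoint of these two values, and
by Pascal's rule they are `C(l,r-1)` apart, so every value of `F_Δ` is at least half that gap
away from `m`.
-/

open Finset

theorem abs_midpoint_sub_ge_of_monotone {α : Type*} [Field α] [LinearOrder α] [IsStrictOrderedRing α]
    {f : ℕ → α} (hf : Monotone f) (l n : ℕ) :
    (f (l + 1) - f l) / 2 ≤ |(f l + f (l + 1)) / 2 - f n| := by
  rcases le_or_gt n l with hnl | hln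
  · have := hf hnl
    exact le_abs.mpr (Or.inl (by linarith))
  · have := hf (Nat.succ_le_of_lt hln)
    exact le_abs.mpr (Or.inr (by linarith))

theorem small_rainbow_tight_general (r a : ℕ) (hr : 2 ≤ r)
    (Δ : Finset ℕ → ℕ)
    (hF : Fdelta r Δ = {m : ℕ | ∃ n : ℕ, n ≤ a ∧ m = Nat.choose n r + 1})
    (l : ℕ)
    (heven : 2 ∣ Nat.choose l r + Nat.choose (l + 1) r)
    (m : ℕ) (hm : m = (Nat.choose l r + Nat.choose (l + 1) r + 2) / 2) :
    ∀ m' ∈ Fdelta r Δ, (Nat.choose l (r - 1) : ℚ) / 2 ≤ |(m : ℚ) - (m' : ℚ)| := by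
  intro m' hm'
  rw [hF] at hm'
  obtain ⟨n, -, rfl⟩ := hm'
  obtain ⟨s, rfl⟩ : ∃ s, r = s + 1 := ⟨r - 1, by omega⟩
  have hm_midpoint : (m : ℚ) = (l.choose (s + 1) + (l + 1).choose (s + 1) : ℚ) / 2 + 1 := by
    rw [hm, Nat.add_div_right _ two_pos, Nat.cast_succ, Nat.cast_div heven two_ne_zero]
    push_cast; ring
  have hpascal : ((l + 1).choose (s + 1) : ℚ) - l.choose (s + 1) = l.choose s := by
    rw [Nat.choose_succ_succ']; push_cast; ring
  have hgap := abs_midpoint_sub_ge_of_monotone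
    (f := fun n ↦ (n.choose (s + 1) : ℚ)) (fun _ _ h ↦ Nat.cast_le.mpr (Nat.choose_le_choose _ h)) l n
  rw [hpascal] at hgap
  calc (l.choose s : ℚ) / 2
      ≤ |(l.choose (s + 1) + (l + 1).choose (s + 1) : ℚ) / 2 - n.choose (s + 1)| := hgap
    _ = |(m : ℚ) - ((n.choose (s + 1) + 1 : ℕ) : ℚ)| := by rw [hm_midpoint]; push_cast; ring_nf

/-- **Tightness of the approximation theorem.** If `Δ : ℕ^(r) ↠ [C(a,r)+1]` is a surjective
colouring with `F_Δ = { C(n,r) + 1 : n ≤ a }`, then for `r ≤ l < a` with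
`C(l,r) + C(l+1,r)` even and `m = (C(l,r) + C(l+1,r) + 2)/2`, every `m' ∈ F_Δ` satisfies
`|m - m'| ≥ C(l,r-1)/2`. -/
theorem small_rainbow_tight (r a : ℕ) (hr : 2 ≤ r) (ha : r ≤ a)
    (Δ : Finset ℕ → ℕ) (hΔ : IsColouring r (Nat.choose a r + 1) Δ)
    (hF : Fdelta r Δ = {m : ℕ | ∃ n : ℕ, n ≤ a ∧ m = Nat.choose n r + 1})
    (l : ℕ) (hl : r ≤ l) (hla : l < a)
    (heven : 2 ∣ Nat.choose l r + Nat.choose (l + 1) r)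
    (m : ℕ) (hm : m = (Nat.choose l r + Nat.choose (l + 1) r + 2) / 2) :
    ∀ m' ∈ Fdelta r Δ, (Nat.choose l (r - 1) : ℚ) / 2 ≤ |(m : ℚ) - (m' : ℚ)| :=
  small_rainbow_tight_general r a hr Δ hF l heven m hm
end

section
/- For every integer r ≥ 3 there exist infinitely many natural numbers n for which there exists a natural number k with k > Σ_{i=0}^{r} C(n-1,i) and a surjective colouring Δ: ℕ^(r) ↠ [k] such that F_Δ does not intersect the interval J_{r,n} = ( Σ_{i=0}^{r} C(n-1,i), Σ_{i=0}^{r} C(n,i) ]. -/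
open Finset

/-!
Place a finite set `A` inside `ℕ` and fix a family `L` of nonempty subsets of `A` of size at most
`r`. Colour an `r`-set by its trace on `A` when that trace lies in `L`, and by one extra colour
otherwise. On an infinite `X` the colours seen are the extra one and those of the members of `L`
inside `X`: all `#L + 1` of them if `A ⊆ X`, and at most `#{T ∈ L | x ∉ T} + 1` if `x ∈ A` is
missing from `X`. So it suffices to find, for `A = ℤ/(n+1)`, a family with `#L ≥ Σ_{i ≤ r} C(n, i)`
in which every point misses fewer than `Σ_{i ≤ r} C(n - 1, i)` members.

By Pascal's rule `Σ_{i ≤ r} C(n, i) = Σ_{j ≤ r, j ≡ r (mod 2)} C(n + 1, j)`, so the levels of `A`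
of size `j ≡ r` almost do it; only the bottom levels are adjusted, using the cycle `ℤ/(n+1)`.
For odd `r` the singletons are replaced by the cycle edges `{i, i + 1}`, which every point misses
one time fewer. For even `r` a singleton replaces the empty set, and the cycle edges among the
pairs are traded for the cyclic triangles `{i, i + 1, i + 2}`.
-/

lemma card_biUnion_of_card_eq {α : Type*} [DecidableEq α] {F : ℕ → Finset (Finset α)}
    (hF : ∀ j, ∀ T ∈ F j, #T = j) (s : Finset ℕ) : #(s.biUnion F) = ∑ j ∈ s, #(F j) :=
  card_biUnion fun i _ j _ hij =>
    disjoint_left.mpr fun T hi hj => hij ((hF i T hi).symm.trans (hF j T hj))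

lemma filter_notMem_powersetCard {α : Type*} [DecidableEq α] (j : ℕ) (s : Finset α) (x : α) :
    {T ∈ powersetCard j s | x ∉ T} = powersetCard j (s.erase x) := by
  ext T
  simp only [mem_filter, mem_powersetCard, subset_erase]
  tauto

lemma filter_sdiff_distrib {α : Type*} [DecidableEq α] (s t : Finset α) (p : α → Prop)
    [DecidablePred p] : {a ∈ s \ t | p a} = {a ∈ s | p a} \ {a ∈ t | p a} := by
  ext
  simp only [mem_filter, mem_sdiff]
  tauto

lemma sum_range_choose_eq_sum_parity (n r : ℕ) :
    ∑ i ∈ range (r + 1), n.choose i =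
      ∑ j ∈ range (r + 1), if j % 2 = r % 2 then (n + 1).choose j else 0 := by
  induction r using Nat.twoStepInduction with
  | zero => simp
  | one => simp [sum_range_succ, add_comm]
  | more r ih _ =>
    rw [sum_range_succ _ (r + 2), sum_range_succ _ (r + 1), ih, sum_range_succ _ (r + 2),
      sum_range_succ _ (r + 1), Nat.add_mod_right, if_neg (by omega), if_pos rfl,
      Nat.choose_succ_succ' n (r + 1)]
    ring

lemma sum_range_add_le_sum_range {f g : ℕ → ℕ} {k r c : ℕ} (hkr : k ≤ r)
    (hlow : ∑ j ∈ range k, f j + c ≤ ∑ j ∈ range k, g j) (htail : ∀ j, k ≤ j → f j = g j) :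
    ∑ j ∈ range r, f j + c ≤ ∑ j ∈ range r, g j := by
  have : ∑ j ∈ Ico k r, f j = ∑ j ∈ Ico k r, g j :=
    sum_congr rfl fun j hj => htail j (mem_Ico.mp hj).1
  rw [← sum_range_add_sum_Ico f hkr, ← sum_range_add_sum_Ico g hkr]
  omega

section FamilyColouring

variable {α : Type*} (ι : α ↪ ℕ) {r : ℕ} {X : Set ℕ}

lemma exists_card_eq_preimage_eq [Finite α] (hX : X.Infinite) {T : Finset α} (hT : #T ≤ r)
    (hTX : ∀ a ∈ T, ι a ∈ X) :
    ∃ e : Finset ℕ, ↑e ⊆ X ∧ #e = r ∧ e.preimage ι ι.injective.injOn = T := by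
  obtain ⟨E, hEX, hE⟩ := (hX.sdiff (Set.finite_range ι)).exists_subset_card_eq (r - #T)
  have hdisj : Disjoint (T.map ι) E := by
    refine disjoint_left.mpr fun b hb hbE => (hEX hbE).2 ?_
    obtain ⟨a, -, rfl⟩ := mem_map.mp hb
    exact Set.mem_range_self a
  refine ⟨T.map ι ∪ E, ?_, ?_, ?_⟩
  · simp only [coe_union, coe_map, Set.union_subset_iff, Set.image_subset_iff]
    exact ⟨fun a ha => hTX a ha, fun b hb => (hEX hb).1⟩
  · rw [card_union_of_disjoint hdisj, card_map, hE]
    omega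
  · ext a
    simp only [mem_preimage, mem_union, mem_map']
    exact ⟨fun h => h.resolve_right fun ha => (hEX ha).2 (Set.mem_range_self a), Or.inl⟩

variable [DecidableEq α] (L : Finset (Finset α))

noncomputable def familyColour (T : Finset α) : ℕ :=
  if h : T ∈ L then L.equivFin ⟨T, h⟩ + 2 else 1

noncomputable def familyColouring (e : Finset ℕ) : ℕ :=
  familyColour L (e.preimage ι ι.injective.injOn)

variable {L}

lemma familyColour_of_notMem {T : Finset α} (hT : T ∉ L) : familyColour L T = 1 := by
  simp [familyColour, hT]

lemma bijOn_familyColour :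
    Set.BijOn (familyColour L) L (Finset.Icc 2 (#L + 1) : Finset ℕ) := by
  refine ⟨fun T hT => ?_, fun T hT T' hT' h => ?_, fun c hc => ?_⟩
  · have := (L.equivFin ⟨T, hT⟩).isLt
    simp only [familyColour, dif_pos (mem_coe.mp hT), coe_Icc, Set.mem_Icc]
    omega
  · simp only [familyColour, dif_pos (mem_coe.mp hT), dif_pos (mem_coe.mp hT'),
      Nat.add_right_cancel_iff, Fin.val_inj, EmbeddingLike.apply_eq_iff_eq, Subtype.mk.injEq] at h
    exact h
  · simp only [coe_Icc, Set.mem_Icc] at hc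
    refine ⟨_, (L.equivFin.symm ⟨c - 2, by omega⟩).2, ?_⟩
    simp only [familyColour, coe_mem, dif_pos, Subtype.coe_eta, Equiv.apply_symm_apply]
    omega

lemma familyColour_mem_Icc (T : Finset α) : familyColour L T ∈ Finset.Icc 1 (#L + 1) := by
  by_cases hT : T ∈ L
  · have := bijOn_familyColour.mapsTo (mem_coe.mpr hT)
    simp only [coe_Icc, Set.mem_Icc, Finset.mem_Icc] at this ⊢
    omega
  · simp [familyColour_of_notMem hT]

lemma exists_familyColouring_eq [Finite α] (hL₀ : ∅ ∉ L) (hLr : ∀ T ∈ L, #T ≤ r)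
    (hX : X.Infinite) (hιX : ∀ a, ι a ∈ X) {c : ℕ} (hc : c ∈ Finset.Icc 1 (#L + 1)) :
    ∃ e : Finset ℕ, ↑e ⊆ X ∧ #e = r ∧ familyColouring ι L e = c := by
  rw [Finset.mem_Icc] at hc
  obtain ⟨T, hTr, rfl⟩ : ∃ T : Finset α, #T ≤ r ∧ familyColour L T = c := by
    rcases hc.1.eq_or_lt with rfl | hc2
    · exact ⟨∅, by simp, familyColour_of_notMem hL₀⟩
    · obtain ⟨T, hT, rfl⟩ :=
        bijOn_familyColour.surjOn (show c ∈ ((Finset.Icc 2 (#L + 1) : Finset ℕ) : Set ℕ) by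
          simp only [coe_Icc, Set.mem_Icc]; omega)
      exact ⟨T, hLr T hT, rfl⟩
  obtain ⟨e, heX, he, hT⟩ := exists_card_eq_preimage_eq ι hX hTr fun a _ => hιX a
  exact ⟨e, heX, he, by rw [familyColouring, hT]⟩

lemma isColouring_familyColouring [Finite α] (hL₀ : ∅ ∉ L) (hLr : ∀ T ∈ L, #T ≤ r) :
    IsColouring r (#L + 1) (familyColouring ι L) := by
  refine ⟨fun e _ => familyColour_mem_Icc _, fun c hc => ?_⟩
  obtain ⟨e, -, he, hc⟩ :=
    exists_familyColouring_eq ι hL₀ hLr Set.infinite_univ (fun _ => trivial) hc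
  exact ⟨e, he, hc⟩

lemma gamma_familyColouring_of_forall_mem [Finite α] (hL₀ : ∅ ∉ L) (hLr : ∀ T ∈ L, #T ≤ r)
    (hX : X.Infinite) (hιX : ∀ a, ι a ∈ X) : gamma r (familyColouring ι L) X = #L + 1 := by
  have : coloursOn r (familyColouring ι L) X = Finset.Icc 1 (#L + 1) := by
    refine subset_antisymm (Set.image_subset_iff.mpr fun e _ => familyColour_mem_Icc _)
      fun c hc => ?_
    obtain ⟨e, heX, he, hc⟩ := exists_familyColouring_eq ι hL₀ hLr hX hιX hc
    exact ⟨e, ⟨heX, he⟩, hc⟩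
  rw [gamma, this, Set.ncard_coe_finset, Nat.card_Icc, Nat.add_sub_cancel]

lemma gamma_familyColouring_le {x : α} (hx : ι x ∉ X) :
    gamma r (familyColouring ι L) X ≤ #{T ∈ L | x ∉ T} + 1 := by
  have hsub : coloursOn r (familyColouring ι L) X ⊆
      insert 1 (familyColour L '' ↑{T ∈ L | x ∉ T}) := by
    rintro _ ⟨e, ⟨heX, -⟩, rfl⟩
    by_cases hT : e.preimage ι ι.injective.injOn ∈ L
    · refine Or.inr ⟨_, ?_, rfl⟩
      rw [coe_filter]
      exact ⟨hT, fun hxT => hx (heX (mem_preimage.mp hxT))⟩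
    · exact Or.inl (familyColour_of_notMem hT)
  calc gamma r (familyColouring ι L) X
      ≤ (insert 1 (familyColour L '' ↑{T ∈ L | x ∉ T})).ncard :=
        Set.ncard_le_ncard hsub (Set.toFinite _)
    _ ≤ (familyColour L '' ↑{T ∈ L | x ∉ T}).ncard + 1 := Set.ncard_insert_le _ _
    _ ≤ #{T ∈ L | x ∉ T} + 1 := by
        grw [Set.ncard_image_le (finite_toSet _), Set.ncard_coe_finset]

end FamilyColouring

theorem exists_colouring_avoiding {α : Type*} [Finite α] [DecidableEq α] (L : Finset (Finset α))
    {r : ℕ} (hL₀ : ∅ ∉ L) (hLr : ∀ T ∈ L, #T ≤ r) {a b : ℕ} (hab : a ≤ b) (hb : b ≤ #L)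
    (ha : ∀ x, #{T ∈ L | x ∉ T} < a) :
    ∃ k, a < k ∧ ∃ Δ : Finset ℕ → ℕ, IsColouring r k Δ ∧ ∀ m ∈ Fdelta r Δ, ¬(a < m ∧ m ≤ b) := by
  obtain ⟨f, hf⟩ := exists_injective_nat α
  let ι : α ↪ ℕ := ⟨f, hf⟩
  refine ⟨#L + 1, by omega, familyColouring ι L, isColouring_familyColouring ι hL₀ hLr, ?_⟩
  rintro _ ⟨X, hX, rfl⟩ ⟨hlo, hhi⟩
  by_cases hιX : ∀ x, ι x ∈ X
  · rw [gamma_familyColouring_of_forall_mem ι hL₀ hLr hX hιX] at hhi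
    omega
  · obtain ⟨x, hx⟩ := not_forall.mp hιX
    have := gamma_familyColouring_le ι (L := L) (r := r) hx
    have := ha x
    omega

namespace ZMod

lemma natCast_injOn_range {m j : ℕ} (hj : j ≤ m) :
    Set.InjOn (Nat.cast : ℕ → ZMod m) (range j) := by
  intro d hd d' hd' h
  simp only [coe_range, Set.mem_Iio] at hd hd'
  rwa [natCast_eq_natCast_iff', Nat.mod_eq_of_lt (by omega), Nat.mod_eq_of_lt (by omega)] at h

variable {m : ℕ}

def window (j : ℕ) (i : ZMod m) : Finset (ZMod m) :=
  (range j).image fun d : ℕ => i + (d : ZMod m)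

lemma mem_window {j : ℕ} {i x : ZMod m} : x ∈ window j i ↔ ∃ d < j, i + d = x := by
  simp [window]

lemma card_window {j : ℕ} (hj : j ≤ m) (i : ZMod m) : #(window j i) = j := by
  rw [window, card_image_of_injOn, card_range]
  exact (add_right_injective i).comp_injOn (natCast_injOn_range hj)

/-- `i` is the only point of `window j i` whose predecessor is not in it. -/
lemma window_injective {j : ℕ} (hj : 0 < j) (hjm : j < m) :
    Function.Injective (window (m := m) j) := by
  intro i i' h
  by_contra hne
  obtain ⟨d, hd, hdi⟩ : ∃ d < j, i + d = i' := mem_window.mp (h ▸ mem_window.mpr ⟨0, hj, by simp⟩)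
  have hd0 : d ≠ 0 := by
    rintro rfl
    exact hne (by simpa using hdi)
  obtain ⟨e, he, hei⟩ : ∃ e < j, i' + e = i' - 1 :=
    mem_window.mp (h ▸ mem_window.mpr ⟨d - 1, by omega, by
      rw [← hdi, Nat.cast_pred (by omega)]; ring⟩)
  have hdvd : m ∣ e + 1 := by
    rw [← natCast_eq_zero_iff]
    push_cast
    linear_combination hei
  exact absurd (Nat.le_of_dvd (by omega) hdvd) (by omega)

variable [NeZero m]

lemma card_filter_mem_window {j : ℕ} (hj : j ≤ m) (x : ZMod m) : #{i | x ∈ window j i} = j := by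
  have : ({i | x ∈ window j i} : Finset (ZMod m)) =
      (range j).image fun d : ℕ => x - (d : ZMod m) := by
    ext i
    simp only [mem_filter, mem_univ, true_and, mem_window, mem_image, mem_range,
      sub_eq_iff_eq_add, eq_comm (a := x), add_comm i]
  rw [this, card_image_of_injOn, card_range]
  exact sub_right_injective.comp_injOn (natCast_injOn_range hj)

def windows (j : ℕ) : Finset (Finset (ZMod m)) := univ.image (window j)

lemma card_windows {j : ℕ} (hj : 0 < j) (hjm : j < m) : #(windows (m := m) j) = m := by
  rw [windows, card_image_of_injective _ (window_injective hj hjm), card_univ, card]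

lemma card_filter_notMem_windows {j : ℕ} (hj : 0 < j) (hjm : j < m) (x : ZMod m) :
    #{T ∈ windows j | x ∉ T} = m - j := by
  have := card_filter_add_card_filter_not (s := univ) (p := fun i => x ∈ window j i)
  rw [card_filter_mem_window hjm.le, card_univ, card] at this
  rw [windows, filter_image, card_image_of_injective _ (window_injective hj hjm)]
  omega

lemma windows_subset_powersetCard {j : ℕ} (hj : j ≤ m) :
    windows (m := m) j ⊆ powersetCard j univ := by
  simp only [windows, image_subset_iff, mem_univ, mem_powersetCard, subset_univ, true_and,
    forall_const]
  exact card_window hj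

end ZMod

section AvoidingFamily

variable {n : ℕ}

lemma card_filter_notMem_powersetCard_univ (j : ℕ) (x : ZMod (n + 1)) :
    #{T ∈ powersetCard j univ | x ∉ T} = n.choose j := by
  rw [filter_notMem_powersetCard, card_powersetCard, card_erase_of_mem (mem_univ x), card_univ,
    ZMod.card, Nat.add_sub_cancel]

open ZMod in
def avoidingLevel (r : ℕ) : ℕ → Finset (Finset (ZMod (n + 1)))
  | 0 => ∅
  | 1 => if r % 2 = 1 then ∅ else {{0}}
  | 2 => if r % 2 = 1 then windows 2 else powersetCard 2 univ \ windows 2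
  | 3 => if r % 2 = 1 then powersetCard 3 univ else windows 3
  | j + 4 => if (j + 4) % 2 = r % 2 then powersetCard (j + 4) univ else ∅

lemma avoidingLevel_subset_powersetCard (hn : 3 ≤ n) (r j : ℕ) :
    avoidingLevel (n := n) r j ⊆ powersetCard j univ := by
  match j with
  | 0 => simp [avoidingLevel]
  | 1 => simp only [avoidingLevel]; split_ifs <;> simp
  | 2 =>
    simp only [avoidingLevel]
    split_ifs
    · exact ZMod.windows_subset_powersetCard (by omega)
    · exact sdiff_subset
  | 3 =>
    simp only [avoidingLevel]
    split_ifs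
    · exact subset_rfl
    · exact ZMod.windows_subset_powersetCard (by omega)
  | j + 4 => simp only [avoidingLevel]; split_ifs <;> simp

lemma card_of_mem_avoidingLevel (hn : 3 ≤ n) {r j : ℕ} {T : Finset (ZMod (n + 1))}
    (hT : T ∈ avoidingLevel r j) : #T = j :=
  (mem_powersetCard.mp (avoidingLevel_subset_powersetCard hn r j hT)).2

def avoidingFamily (r : ℕ) : Finset (Finset (ZMod (n + 1))) :=
  (range (r + 1)).biUnion (avoidingLevel r)

lemma empty_notMem_avoidingFamily (hn : 3 ≤ n) (r : ℕ) : ∅ ∉ avoidingFamily (n := n) r := by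
  simp only [avoidingFamily, mem_biUnion, not_exists, not_and]
  intro j _ h
  obtain rfl : 0 = j := card_empty.symm.trans (card_of_mem_avoidingLevel hn h)
  simp [avoidingLevel] at h

lemma card_le_of_mem_avoidingFamily (hn : 3 ≤ n) {r : ℕ} {T : Finset (ZMod (n + 1))}
    (hT : T ∈ avoidingFamily r) : #T ≤ r := by
  obtain ⟨j, hj, hT⟩ := mem_biUnion.mp hT
  rw [card_of_mem_avoidingLevel hn hT]
  exact Nat.lt_succ_iff.mp (mem_range.mp hj)

lemma sum_choose_le_card_avoidingFamily (hn : 3 ≤ n) {r : ℕ} (hr : 3 ≤ r) :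
    ∑ i ∈ range (r + 1), n.choose i ≤ #(avoidingFamily (n := n) r) := by
  rw [avoidingFamily, card_biUnion_of_card_eq (fun j T => card_of_mem_avoidingLevel hn),
    sum_range_choose_eq_sum_parity]
  have hwin₂ := ZMod.card_windows (m := n + 1) (j := 2) (by omega) (by omega)
  have hwin₃ := ZMod.card_windows (m := n + 1) (j := 3) (by omega) (by omega)
  have hpairs := card_sdiff_add_card_eq_card (ZMod.windows_subset_powersetCard (m := n + 1)
    (j := 2) (by omega))
  rw [card_powersetCard, card_univ, ZMod.card, hwin₂] at hpairs
  refine (add_zero _).symm.trans_le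
    (sum_range_add_le_sum_range (k := 4) (by omega) ?_ fun j hj => ?_)
  · rcases Nat.mod_two_eq_zero_or_one r with h | h
    · simp only [sum_range_succ, range_zero, sum_empty, avoidingLevel, h, Nat.reduceMod,
        zero_ne_one, one_ne_zero, reduceIte, Nat.choose_zero_right, card_empty, card_singleton,
        hwin₃]
      omega
    · simp [sum_range_succ, avoidingLevel, h, hwin₂]
  · obtain ⟨j, rfl⟩ := Nat.exists_eq_add_of_le' hj
    simp only [avoidingLevel]
    split_ifs <;> simp

lemma card_filter_notMem_avoidingFamily_lt (hn : 3 ≤ n) {r : ℕ} (hr : 3 ≤ r)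
    (x : ZMod (n + 1)) :
    #{T ∈ avoidingFamily r | x ∉ T} < ∑ i ∈ range (r + 1), (n - 1).choose i := by
  rw [avoidingFamily, filter_biUnion,
    card_biUnion_of_card_eq (fun j T hT => card_of_mem_avoidingLevel hn (mem_filter.mp hT).1),
    sum_range_choose_eq_sum_parity, Nat.sub_add_cancel (by omega)]
  have hmiss₂ := ZMod.card_filter_notMem_windows (m := n + 1) (j := 2) (by omega) (by omega) x
  have hmiss₃ := ZMod.card_filter_notMem_windows (m := n + 1) (j := 3) (by omega) (by omega) x
  have hsub := filter_subset_filter (x ∉ ·)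
    (ZMod.windows_subset_powersetCard (m := n + 1) (j := 2) (by omega))
  have hle := card_le_card hsub
  have hpairs := card_sdiff_of_subset hsub
  rw [card_filter_notMem_powersetCard_univ, hmiss₂] at hle hpairs
  have hsingle : #{T ∈ ({{0}} : Finset (Finset (ZMod (n + 1)))) | x ∉ T} ≤ 1 :=
    (card_filter_le _ _).trans (card_singleton _).le
  refine Nat.lt_of_succ_le (sum_range_add_le_sum_range (c := 1) (k := 4) (by omega) ?_
    fun j hj => ?_)
  · rcases Nat.mod_two_eq_zero_or_one r with h | h
    · simp only [sum_range_succ, range_zero, sum_empty, avoidingLevel, h, Nat.reduceMod,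
        zero_ne_one, one_ne_zero, reduceIte, Nat.choose_zero_right, filter_empty, card_empty,
        filter_sdiff_distrib, hpairs, hmiss₃]
      omega
    · simp only [sum_range_succ, range_zero, sum_empty, avoidingLevel, h, Nat.reduceMod,
        zero_ne_one, reduceIte, filter_empty, card_empty, hmiss₂,
        card_filter_notMem_powersetCard_univ, Nat.choose_one_right]
      omega
  · obtain ⟨j, rfl⟩ := Nat.exists_eq_add_of_le' hj
    simp only [avoidingLevel]
    split_ifs <;> simp [card_filter_notMem_powersetCard_univ]

end AvoidingFamily

/-- **Theorem 4.** For every `r ≥ 3` there are infinitely many `n` for which there is a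
surjective colouring `Δ : ℕ^(r) ↠ [k]` with `k > Σ_{i=0}^{r} C(n-1,i)` such that `F_Δ`
avoids the interval `J_{r,n} = (Σ_{i=0}^{r} C(n-1,i), Σ_{i=0}^{r} C(n,i)]`. -/
theorem Fdelta_avoids_J (r : ℕ) (hr : 3 ≤ r) :
    {n : ℕ | ∃ k : ℕ, (∑ i ∈ Finset.range (r + 1), Nat.choose (n - 1) i) < k ∧
      ∃ Δ : Finset ℕ → ℕ, IsColouring r k Δ ∧
        ∀ m' ∈ Fdelta r Δ,
          ¬((∑ i ∈ Finset.range (r + 1), Nat.choose (n - 1) i) < m' ∧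
            m' ≤ ∑ i ∈ Finset.range (r + 1), Nat.choose n i)}.Infinite := by
  refine (Set.Ici_infinite 3).mono fun n (hn : 3 ≤ n) => ?_
  exact exists_colouring_avoiding (avoidingFamily r) (empty_notMem_avoidingFamily hn r)
    (fun _ => card_le_of_mem_avoidingFamily hn)
    (sum_le_sum fun i _ => Nat.choose_le_choose i (Nat.sub_le n 1))
    (sum_choose_le_card_avoidingFamily hn hr) (card_filter_notMem_avoidingFamily_lt hn hr)
end

section
/- For integers r ≥ 2 and a ≥ r, let Δ be the 'small-set colouring' of ℕ^(r): the colouring that assigns to each r-element subset e of ℕ the colour e ∩ [a] (a surjective colouring with k = Σ_{i=0}^{r} C(a,i) colours). Then F_Δ = { Σ_{i=0}^{r} C(n,i) : n a natural number with n ≤ a }. -/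
open Finset

/-!
On an infinite set `X`, the colours `e ∩ A` of the `r`-subsets `e ⊆ X` are exactly the subsets
of `X ∩ A` with at most `r` elements: a smaller one is padded to size `r` with points of the
infinite set `X \ A`. Hence `γ(X) = Σ_{i ≤ r} C(|X ∩ A|, i)`, and for `A = [a]` every value
`|X ∩ [a]| = n ≤ a` is attained, by `X = [n] ∪ (a, ∞)`.
-/

theorem Finset.card_filter_powerset_card_le {α : Type*} (t : Finset α) (r : ℕ) :
    #{s ∈ t.powerset | #s ≤ r} = ∑ i ∈ range (r + 1), (#t).choose i := by
  rw [card_eq_sum_card_fiberwise (f := card) (t := range (r + 1))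
    fun s hs => mem_range.2 (Nat.lt_succ_of_le (mem_filter.1 hs).2)]
  refine sum_congr rfl fun i hi => ?_
  rw [filter_filter, ← card_powersetCard, powersetCard_eq_filter]
  congr 1
  exact filter_congr fun s _ => by
    have := mem_range.1 hi
    constructor <;> omega

theorem coloursOn_inter_eq (r : ℕ) (A : Finset ℕ) {X : Set ℕ} (hX : X.Infinite) :
    coloursOn r (· ∩ A) X = {s | ↑s ⊆ X ∩ ↑A ∧ #s ≤ r} := by
  ext s
  constructor
  · rintro ⟨e, ⟨heX, rfl⟩, rfl⟩
    refine ⟨fun x hx => ?_, card_le_card inter_subset_left⟩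
    obtain ⟨hxe, hxA⟩ := mem_inter.1 hx
    exact ⟨heX hxe, hxA⟩
  · rintro ⟨hsXA, hsr⟩
    obtain ⟨u, huXA, hu⟩ := (hX.sdiff A.finite_toSet).exists_subset_card_eq (r - #s)
    have hdisj : Disjoint s u :=
      disjoint_left.2 fun x hxs hxu => (huXA hxu).2 (hsXA hxs).2
    refine ⟨s ∪ u, ⟨?_, ?_⟩, ?_⟩
    · rw [coe_union]
      exact Set.union_subset (hsXA.trans Set.inter_subset_left) (huXA.trans Set.sdiff_subset)
    · rw [card_union_of_disjoint hdisj, hu]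
      omega
    · ext x
      simp only [mem_inter, mem_union]
      refine ⟨fun ⟨hx, hxA⟩ => hx.resolve_right fun hxu => (huXA hxu).2 hxA,
        fun hxs => ⟨Or.inl hxs, (hsXA hxs).2⟩⟩

theorem gamma_inter_eq (r : ℕ) (A : Finset ℕ) {X : Set ℕ} (hX : X.Infinite) :
    gamma r (· ∩ A) X = ∑ i ∈ range (r + 1), (X ∩ ↑A).ncard.choose i := by
  obtain ⟨t, ht⟩ := (A.finite_toSet.inter_of_right X).exists_finset_coe
  have hcolours : coloursOn r (· ∩ A) X = ↑({s ∈ t.powerset | #s ≤ r}) := by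
    rw [coloursOn_inter_eq r A hX, ← ht]
    ext s
    simp
  rw [gamma, hcolours, Set.ncard_coe_finset, card_filter_powerset_card_le, ← ht,
    Set.ncard_coe_finset]

theorem small_set_colouring_general (r a : ℕ) :
    Fdelta r (fun e : Finset ℕ => e ∩ Finset.Icc 1 a) =
      {m : ℕ | ∃ n : ℕ, n ≤ a ∧ m = ∑ i ∈ Finset.range (r + 1), Nat.choose n i} := by
  ext m
  constructor
  · rintro ⟨X, hX, rfl⟩
    refine ⟨(X ∩ ↑(Icc 1 a)).ncard, ?_, gamma_inter_eq r _ hX⟩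
    calc (X ∩ ↑(Icc 1 a)).ncard ≤ (↑(Icc 1 a) : Set ℕ).ncard :=
          Set.ncard_le_ncard Set.inter_subset_right (Icc 1 a).finite_toSet
      _ = a := by rw [Set.ncard_coe_finset, Nat.card_Icc, Nat.add_sub_cancel]
  · rintro ⟨n, hn, rfl⟩
    have hX : (↑(Icc 1 n) ∪ Set.Ioi a : Set ℕ).Infinite :=
      (Set.Ioi_infinite a).mono Set.subset_union_right
    have htrace : (↑(Icc 1 n) ∪ Set.Ioi a) ∩ ↑(Icc 1 a) = (↑(Icc 1 n) : Set ℕ) := by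
      ext x
      simp only [Set.mem_inter_iff, Set.mem_union, coe_Icc, Set.mem_Icc, Set.mem_Ioi]
      omega
    refine ⟨_, hX, ?_⟩
    rw [gamma_inter_eq r _ hX, htrace, Set.ncard_coe_finset, Nat.card_Icc, Nat.add_sub_cancel]

/-- **Small-set colouring.** For `r ≥ 2` and `a ≥ r`, the colouring of `ℕ^(r)` assigning to
each `r`-set `e` the colour `e ∩ [a]` satisfies `F_Δ = { Σ_{i=0}^{r} C(n,i) : n ≤ a }`. -/
theorem small_set_colouring (r a : ℕ) (hr : 2 ≤ r) (ha : r ≤ a) :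
    Fdelta r (fun e : Finset ℕ => e ∩ Finset.Icc 1 a) =
      {m : ℕ | ∃ n : ℕ, n ≤ a ∧ m = ∑ i ∈ Finset.range (r + 1), Nat.choose n i} :=
  small_set_colouring_general r a
end
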